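/- Consider the Facility Location instance P constructed from a BHM instance (n, M, x, w) with opening cost f > 0. If x_i ⊕ x_j = w_{i,j} for every pair (i, j) ∈ M (the YES case), then the optimal Uniform Facility Location cost of P is at most 2n·(f + √2). -/

import Mathlib

/-- The ambient Euclidean space `ℝ^{8n}`: each index `i ∈ {1, …, 2n}` owns the
four coordinates `(i, 0), (i, 1), (i, 2), (i, 3)`. -/
abbrev bhmSpace (n : ℕ) := EuclideanSpace ℝ (Fin (2 * n) × Fin 4)

/-- The 0/1 vector with 1s exactly in the pair of coordinates
`(i, 0), (i, 1)` (if `b = false`) or `(i, 2), (i, 3)` (if `b = true`). -/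
noncomputable def onesPair (n : ℕ) (i : Fin (2 * n)) (b : Bool) : bhmSpace n :=
  WithLp.toLp 2 (fun q : Fin (2 * n) × Fin 4 => if q.1 = i ∧ (b = true ↔ 2 ≤ (q.2 : ℕ)) then 1 else 0)

/-- The multiset of clients of the Facility Location instance built from a BHM
instance: `100n` copies of `s_i^{x_i} = onesPair n i (x i)` for each
`i ∈ {1, …, 2n}`, plus, for each matching edge `k` joining `(e k).1` to
`(e k).2` with bit `w k`, one copy of
`t⁰ = onesPair n (e k).1 false + onesPair n (e k).2 (!(w k))` and one copy of
`t¹ = onesPair n (e k).1 true + onesPair n (e k).2 (w k)`. -/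
noncomputable def bhmClients (n : ℕ) (x : Fin (2 * n) → Bool)
    (e : Fin n → Fin (2 * n) × Fin (2 * n)) (w : Fin n → Bool) :
    Multiset (bhmSpace n) :=
  (Finset.univ : Finset (Fin (2 * n))).val.bind
      (fun i => Multiset.replicate (100 * n) (onesPair n i (x i)))
    + (Finset.univ : Finset (Fin n)).val.bind
      (fun k => {onesPair n (e k).1 false + onesPair n (e k).2 (!(w k)),
                 onesPair n (e k).1 true + onesPair n (e k).2 (w k)})

/-- The Uniform Facility Location cost (with multiplicity) of opening the
nonempty finite facility set `F` for the BHM instance, with opening cost `f`. -/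
noncomputable def bhmCost (n : ℕ) (x : Fin (2 * n) → Bool)
    (e : Fin n → Fin (2 * n) × Fin (2 * n)) (w : Fin n → Bool)
    (f : ℝ) (F : Finset (bhmSpace n)) : ℝ :=
  ((bhmClients n x e w).map (fun p => Metric.infDist p (F : Set (bhmSpace n)))).sum
    + f * F.card

/-- The optimal Uniform Facility Location cost of the BHM instance. -/
noncomputable def bhmOPT (n : ℕ) (x : Fin (2 * n) → Bool)
    (e : Fin n → Fin (2 * n) × Fin (2 * n)) (w : Fin n → Bool) (f : ℝ) : ℝ :=
  sInf {c : ℝ | ∃ F : Finset (bhmSpace n), F.Nonempty ∧ c = bhmCost n x e w f F}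

/-!
Open one facility at each of the `2n` points `s_i^{x_i}`. These clients, with all their
`100n` copies, are then served at distance `0`. Each of the two clients
`s_i^a + s_j^b` of an edge `(i, j)` is served within distance `‖s^·‖ = √2` as soon as
`x_i = a` or `x_j = b`, and the YES condition `x_i ⊕ x_j = w_{i,j}` guarantees exactly this
for both `t⁰_{i,j}` and `t¹_{i,j}`. The cost is therefore at most `2n·√2 + 2n·f`.
-/

open Metric

lemma infDist_add_le_norm_right_of_mem {E : Type*} [SeminormedAddCommGroup E] {S : Set E}
    {u : E} (v : E) (hu : u ∈ S) : infDist (u + v) S ≤ ‖v‖ := by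
  simpa [dist_eq_norm] using infDist_le_dist_of_mem (x := u + v) hu

lemma infDist_add_le_norm_left_of_mem {E : Type*} [SeminormedAddCommGroup E] {S : Set E}
    (u : E) {v : E} (hv : v ∈ S) : infDist (u + v) S ≤ ‖u‖ := by
  simpa [add_comm] using infDist_add_le_norm_right_of_mem u hv

lemma Bool.or_eq_of_xor_eq {a b c : Bool} (h : xor a b = c) :
    (a = false ∨ b = !c) ∧ (a = true ∨ b = c) := by
  subst h; cases a <;> cases b <;> simp

lemma norm_onesPair (n : ℕ) (i : Fin (2 * n)) (b : Bool) : ‖onesPair n i b‖ = √2 := by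
  have hrow : ∀ a : Fin (2 * n),
      ∑ j : Fin 4, ‖(if a = i ∧ (b = true ↔ 2 ≤ (j : ℕ)) then (1 : ℝ) else 0)‖ ^ 2
        = if a = i then 2 else 0 := by
    intro a
    by_cases h : a = i
    · cases b <;> simp [h] <;> rfl
    · simp [h]
  rw [EuclideanSpace.norm_eq]
  simp only [onesPair, Fintype.sum_prod_type, hrow, Finset.sum_ite_eq', Finset.mem_univ,
    if_true]

noncomputable def bhmCenters (n : ℕ) (x : Fin (2 * n) → Bool) : Finset (bhmSpace n) :=
  Finset.univ.image fun i => onesPair n i (x i)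

lemma onesPair_mem_bhmCenters (n : ℕ) (x : Fin (2 * n) → Bool) (i : Fin (2 * n)) :
    onesPair n i (x i) ∈ (bhmCenters n x : Set (bhmSpace n)) :=
  Finset.mem_coe.2 (Finset.mem_image_of_mem _ (Finset.mem_univ i))

lemma bhmCenters_nonempty {n : ℕ} (hn : 1 ≤ n) (x : Fin (2 * n) → Bool) :
    (bhmCenters n x).Nonempty :=
  ⟨_, onesPair_mem_bhmCenters n x ⟨0, by omega⟩⟩

lemma card_bhmCenters_le (n : ℕ) (x : Fin (2 * n) → Bool) : (bhmCenters n x).card ≤ 2 * n :=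
  Finset.card_image_le.trans_eq (by simp)

lemma infDist_onesPair_add_onesPair_bhmCenters_le {n : ℕ} {x : Fin (2 * n) → Bool}
    {i j : Fin (2 * n)} {a b : Bool} (h : x i = a ∨ x j = b) :
    infDist (onesPair n i a + onesPair n j b) (bhmCenters n x : Set (bhmSpace n)) ≤ √2 := by
  rcases h with rfl | rfl
  · simpa [norm_onesPair] using
      infDist_add_le_norm_right_of_mem (onesPair n j b) (onesPair_mem_bhmCenters n x i)
  · simpa [norm_onesPair] using
      infDist_add_le_norm_left_of_mem (onesPair n i a) (onesPair_mem_bhmCenters n x j)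

lemma bhmCost_eq (n : ℕ) (x : Fin (2 * n) → Bool) (e : Fin n → Fin (2 * n) × Fin (2 * n))
    (w : Fin n → Bool) (f : ℝ) (F : Finset (bhmSpace n)) :
    bhmCost n x e w f F =
      ∑ i, (100 * n : ℕ) * infDist (onesPair n i (x i)) (F : Set (bhmSpace n))
        + ∑ k, (infDist (onesPair n (e k).1 false + onesPair n (e k).2 (!(w k))) F
          + infDist (onesPair n (e k).1 true + onesPair n (e k).2 (w k)) F)
        + f * F.card := by
  simp only [bhmCost, bhmClients, Multiset.map_add, Multiset.sum_add, Multiset.map_bind,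
    Multiset.sum_bind, Multiset.map_replicate, Multiset.sum_replicate, nsmul_eq_mul,
    Multiset.insert_eq_cons, Multiset.map_cons, Multiset.map_singleton, Multiset.sum_cons,
    Multiset.sum_singleton]
  rfl

lemma bhmCost_nonneg (n : ℕ) (x : Fin (2 * n) → Bool) (e : Fin n → Fin (2 * n) × Fin (2 * n))
    (w : Fin n → Bool) {f : ℝ} (hf : 0 ≤ f) (F : Finset (bhmSpace n)) :
    0 ≤ bhmCost n x e w f F :=
  add_nonneg (Multiset.sum_nonneg fun _ hc => by
    obtain ⟨p, -, rfl⟩ := Multiset.mem_map.1 hc; exact infDist_nonneg) (by positivity)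

lemma bhmOPT_le_bhmCost (n : ℕ) (x : Fin (2 * n) → Bool) (e : Fin n → Fin (2 * n) × Fin (2 * n))
    (w : Fin n → Bool) {f : ℝ} (hf : 0 ≤ f) {F : Finset (bhmSpace n)} (hF : F.Nonempty) :
    bhmOPT n x e w f ≤ bhmCost n x e w f F :=
  csInf_le ⟨0, by rintro c ⟨F', -, rfl⟩; exact bhmCost_nonneg n x e w hf F'⟩ ⟨F, hF, rfl⟩

theorem stmt_16_general (n : ℕ) (hn : 1 ≤ n)
    (x : Fin (2 * n) → Bool) (e : Fin n → Fin (2 * n) × Fin (2 * n))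
    (w : Fin n → Bool)
    (f : ℝ) (hf : 0 < f)
    (hyes : ∀ k, Bool.xor (x (e k).1) (x (e k).2) = w k) :
    bhmOPT n x e w f ≤ 2 * n * (f + Real.sqrt 2) := by
  have hedge : ∀ k,
      infDist (onesPair n (e k).1 false + onesPair n (e k).2 (!(w k)))
          (bhmCenters n x : Set (bhmSpace n))
        + infDist (onesPair n (e k).1 true + onesPair n (e k).2 (w k)) (bhmCenters n x)
        ≤ 2 * √2 := fun k => by
    obtain ⟨h0, h1⟩ := Bool.or_eq_of_xor_eq (hyes k)
    linarith [infDist_onesPair_add_onesPair_bhmCenters_le h0,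
      infDist_onesPair_add_onesPair_bhmCenters_le h1]
  have hcard : (f * (bhmCenters n x).card : ℝ) ≤ f * (2 * n) :=
    mul_le_mul_of_nonneg_left (by exact_mod_cast card_bhmCenters_le n x) hf.le
  calc bhmOPT n x e w f ≤ bhmCost n x e w f (bhmCenters n x) :=
        bhmOPT_le_bhmCost n x e w hf.le (bhmCenters_nonempty hn x)
    _ ≤ 0 + ∑ _k : Fin n, 2 * √2 + f * (2 * n) := by
        rw [bhmCost_eq]
        gcongr ?_ + ?_ + ?_
        · simp [infDist_zero_of_mem (onesPair_mem_bhmCenters n x _)]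
        · exact Finset.sum_le_sum fun k _ => hedge k
    _ = 2 * n * (f + √2) := by
        simp only [Finset.sum_const, Finset.card_univ, Fintype.card_fin, nsmul_eq_mul]; ring

/-- **YES case.** If `e` describes a perfect matching on
`{1, …, 2n}` and `x_i ⊕ x_j = w_{i,j}` for every edge, then the optimal Uniform
Facility Location cost of the instance is at most `2n·(f + √2)`. -/
theorem stmt_16 (n : ℕ) (hn : 1 ≤ n)
    (x : Fin (2 * n) → Bool) (e : Fin n → Fin (2 * n) × Fin (2 * n))
    (w : Fin n → Bool)
    (hmatch : Function.Bijective
      (fun q : Fin n × Bool => if q.2 then (e q.1).2 else (e q.1).1))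
    (f : ℝ) (hf : 0 < f)
    (hyes : ∀ k, Bool.xor (x (e k).1) (x (e k).2) = w k) :
    bhmOPT n x e w f ≤ 2 * n * (f + Real.sqrt 2) :=
  stmt_16_general n hn x e w f hf hyes
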